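/- For every natural number m, the double integral ∫_{-1}^{1} ∫_{-1}^{1} (ξ₁ - ξ₂)^{2m} ln|ξ₁ - ξ₂| dξ₂ dξ₁ equals 2^{2m+2} ln 2 / ((2m+1)(m+1)) − (4m+3) 2^{2m+3} / ((2m+1)² (2m+2)²). -/

import Mathlib

/-!
Substituting `t = ξ₁ - ξ₂` turns the inner integral into `∫ t^n log|t|` over
`[ξ₁ - 1, ξ₁ + 1]`, with `n = 2m`. Both integrations are then done with explicit primitives
`F = powLogPrimitive n` of `t^n log|t|` and `G = powLogSecondPrimitive n` of `F`; these stay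
continuous at the logarithmic singularity `t = 0`, so the fundamental theorem of calculus
applies across it. The double integral is `G 2 - 2 G 0 + G (-2) = 2 G 2`, since `G 0 = 0` and
`G` is even for even `n`.
-/

open Real MeasureTheory Set

lemma continuous_pow_succ_mul_log_sub (k : ℕ) (c : ℝ) :
    Continuous fun x : ℝ => x ^ (k + 1) * (log x - c) := by
  have h : (fun x : ℝ => x ^ (k + 1) * (log x - c))
      = fun x => x ^ k * (x * log x) - c * x ^ (k + 1) := by
    funext x; ring
  rw [h]
  fun_prop [continuous_mul_log]

lemma hasDerivAt_pow_succ_mul_log_sub (k : ℕ) (c : ℝ) {x : ℝ} (hx : x ≠ 0) :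
    HasDerivAt (fun x : ℝ => x ^ (k + 1) * (log x - c))
      (x ^ k * ((k + 1) * (log x - c) + 1)) x := by
  convert! (hasDerivAt_pow (k + 1) x).mul ((hasDerivAt_log hx).sub_const c) using 1
  rw [Nat.add_sub_cancel, pow_succ]
  field_simp
  push_cast
  ring

lemma integral_eq_sub_of_hasDerivAt_of_ne_zero {E : Type*} [NormedAddCommGroup E]
    [NormedSpace ℝ E] [CompleteSpace E] {F f : ℝ → E} {a b : ℝ} (hF : Continuous F)
    (hderiv : ∀ x ≠ 0, HasDerivAt F (f x) x) (hf : IntervalIntegrable f volume a b) :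
    ∫ x in a..b, f x = F b - F a :=
  integral_eq_of_hasDerivAt_off_countable F f (countable_singleton 0) hF.continuousOn
    (fun x hx => hderiv x hx.2) hf

noncomputable def powLogPrimitive (n : ℕ) (x : ℝ) : ℝ :=
  x ^ (n + 1) * (log x - 1 / (n + 1)) / (n + 1)

noncomputable def powLogSecondPrimitive (n : ℕ) (x : ℝ) : ℝ :=
  x ^ (n + 2) * (log x - 1 / (n + 1) - 1 / (n + 2)) / ((n + 1) * (n + 2))

lemma continuous_powLogPrimitive (n : ℕ) : Continuous (powLogPrimitive n) :=
  (continuous_pow_succ_mul_log_sub n _).div_const _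

lemma continuous_powLogSecondPrimitive (n : ℕ) : Continuous (powLogSecondPrimitive n) := by
  unfold powLogSecondPrimitive
  simp only [sub_sub]
  exact (continuous_pow_succ_mul_log_sub (n + 1) _).div_const _

lemma hasDerivAt_powLogPrimitive (n : ℕ) {x : ℝ} (hx : x ≠ 0) :
    HasDerivAt (powLogPrimitive n) (x ^ n * log x) x := by
  refine ((hasDerivAt_pow_succ_mul_log_sub n (1 / ((n : ℝ) + 1)) hx).div_const
    ((n : ℝ) + 1)).congr_deriv ?_
  field_simp
  ring

lemma hasDerivAt_powLogSecondPrimitive (n : ℕ) {x : ℝ} (hx : x ≠ 0) :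
    HasDerivAt (powLogSecondPrimitive n) (powLogPrimitive n x) x := by
  unfold powLogSecondPrimitive
  simp only [sub_sub]
  refine ((hasDerivAt_pow_succ_mul_log_sub (n + 1) (1 / ((n : ℝ) + 1) + 1 / ((n : ℝ) + 2))
    hx).div_const (((n : ℝ) + 1) * ((n : ℝ) + 2))).congr_deriv ?_
  simp only [powLogPrimitive]
  field_simp
  push_cast
  ring

lemma intervalIntegrable_pow_mul_log (n : ℕ) (a b : ℝ) :
    IntervalIntegrable (fun t : ℝ => t ^ n * log t) volume a b :=
  intervalIntegral.intervalIntegrable_log'.continuousOn_mul (continuous_pow n).continuousOn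

lemma integral_pow_mul_log (n : ℕ) (a b : ℝ) :
    ∫ t in a..b, t ^ n * log t = powLogPrimitive n b - powLogPrimitive n a :=
  integral_eq_sub_of_hasDerivAt_of_ne_zero (continuous_powLogPrimitive n)
    (fun _ hx => hasDerivAt_powLogPrimitive n hx) (intervalIntegrable_pow_mul_log n a b)

lemma integral_powLogPrimitive (n : ℕ) (a b : ℝ) :
    ∫ t in a..b, powLogPrimitive n t = powLogSecondPrimitive n b - powLogSecondPrimitive n a :=
  integral_eq_sub_of_hasDerivAt_of_ne_zero (continuous_powLogSecondPrimitive n)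
    (fun _ hx => hasDerivAt_powLogSecondPrimitive n hx)
    ((continuous_powLogPrimitive n).intervalIntegrable a b)

lemma powLogSecondPrimitive_zero (n : ℕ) : powLogSecondPrimitive n 0 = 0 := by
  simp [powLogSecondPrimitive]

lemma powLogSecondPrimitive_neg {n : ℕ} (hn : Even n) (x : ℝ) :
    powLogSecondPrimitive n (-x) = powLogSecondPrimitive n x := by
  simp only [powLogSecondPrimitive, log_neg_eq_log, (hn.add even_two).neg_pow]

lemma integral_sub_pow_mul_log (n : ℕ) (a b x : ℝ) :
    ∫ y in a..b, (x - y) ^ n * log (x - y)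
      = powLogPrimitive n (x - a) - powLogPrimitive n (x - b) := by
  rw [intervalIntegral.integral_comp_sub_left (fun t => t ^ n * log t), integral_pow_mul_log]

lemma integral_integral_sub_pow_mul_log (n : ℕ) (a b : ℝ) :
    ∫ x in a..b, ∫ y in a..b, (x - y) ^ n * log (x - y)
      = powLogSecondPrimitive n (b - a) + powLogSecondPrimitive n (a - b) := by
  have hcont (c : ℝ) : Continuous fun x => powLogPrimitive n (x - c) :=
    (continuous_powLogPrimitive n).comp (continuous_sub_right c)
  simp only [integral_sub_pow_mul_log]
  rw [intervalIntegral.integral_sub ((hcont a).intervalIntegrable a b)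
      ((hcont b).intervalIntegrable a b),
    intervalIntegral.integral_comp_sub_right (powLogPrimitive n),
    intervalIntegral.integral_comp_sub_right (powLogPrimitive n),
    integral_powLogPrimitive, integral_powLogPrimitive]
  simp only [sub_self, powLogSecondPrimitive_zero]
  ring

/-- Int₈(m): the double integral of (ξ₁ - ξ₂)^(2m) · ln|ξ₁ - ξ₂| over [-1,1]² equals
    2^(2m+2) ln 2 / ((2m+1)(m+1)) − (4m+3) 2^(2m+3) / ((2m+1)² (2m+2)²). -/
theorem int8_eval (m : ℕ) :
    ∫ ξ₁ in (-1 : ℝ)..1, ∫ ξ₂ in (-1 : ℝ)..1,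
        (ξ₁ - ξ₂) ^ (2 * m) * Real.log |ξ₁ - ξ₂|
      = 2 ^ (2 * m + 2) * Real.log 2 / ((2 * (m : ℝ) + 1) * ((m : ℝ) + 1))
        - (4 * (m : ℝ) + 3) * 2 ^ (2 * m + 3)
            / ((2 * (m : ℝ) + 1) ^ 2 * (2 * (m : ℝ) + 2) ^ 2) := by
  simp only [log_abs]
  rw [integral_integral_sub_pow_mul_log, show (-1 : ℝ) - 1 = -(1 - -1) by norm_num,
    powLogSecondPrimitive_neg (even_two_mul m)]
  norm_num [powLogSecondPrimitive]
  field_simp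
  ring
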